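/- Under Assumptions (A1)–(A4), fix a noise path Z with Hölder constant Λ, let Y be the corresponding pathwise solution and, for each N with max{c3, c1/(Y(0) − φ(0))^p}·Δ_N < 1, let Ŷ_N be the corresponding drift-implicit Euler scheme extended to [0,T] by Ŷ_N(t) := Ŷ_N(t_k) for t ∈ [t_k, t_{k+1}). Then for every r ≥ 1 there exists a constant 𝒞 > 0, independent of N, such that sup_{t∈[0,T]} |Y(t) − Ŷ_N(t)|^r ≤ 𝒞·Δ_N^{λr} for every such N. -/

import Mathlib

/-! On `[0,T]` the solution keeps a positive distance from the barrier `φ`, so along it the drift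
is Lipschitz in `y` and `λ`-Hölder in `t`; as `Y` is itself `λ`-Hölder (its drift is bounded), one
implicit Euler step commits a local error `O(Δ^(1+λ))`. The one-sided bound `∂b/∂y < c₃` holds on
all of `D_0`, so it applies even though the scheme may come close to `φ`, and it makes the implicit
step stable: `|e_{k+1}| ≤ (1 - c₃Δ)⁻¹ (|e_k| + O(Δ^(1+λ)))`. A discrete Gronwall argument then gives
`|e_k| = O(Δ^λ)`, because `(1 - c₃T/N)^(-N)` is bounded in `N` (it tends to `exp (c₃T)`). Between
grid points the Hölder regularity of `Y` costs another `O(Δ^λ)`. -/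

open MeasureTheory Set Filter Topology

lemma continuousOn_of_abs_sub_le_mul_rpow {f : ℝ → ℝ} {s : Set ℝ} {K r : ℝ} (hr : 0 < r)
    (hf : ∀ x ∈ s, ∀ y ∈ s, |f y - f x| ≤ K * |y - x| ^ r) : ContinuousOn f s := by
  intro x hx
  have hlim : Tendsto (fun y => K * |y - x| ^ r) (𝓝[s] x) (𝓝 0) := by
    have hc : Continuous fun y => K * |y - x| ^ r :=
      continuous_const.mul ((continuous_abs.comp (continuous_id.sub continuous_const)).rpow_const
        fun _ => Or.inr hr.le)
    simpa [Real.zero_rpow hr.ne'] using (hc.tendsto x).mono_left nhdsWithin_le_nhds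
  refine tendsto_iff_dist_tendsto_zero.2
    (squeeze_zero' (Eventually.of_forall fun _ => dist_nonneg) ?_ hlim)
  filter_upwards [self_mem_nhdsWithin] with y hy
  exact (Real.dist_eq _ _).trans_le (hf x hx y hy)

lemma IsCompact.eventually_forall_add_lt {X : Type*} [TopologicalSpace X] {s : Set X}
    (hs : IsCompact s) {f g : X → ℝ} (hf : ContinuousOn f s) (hg : ContinuousOn g s)
    (hgf : ∀ x ∈ s, g x < f x) : ∀ᶠ ε in 𝓝[>] 0, ∀ x ∈ s, g x + ε < f x := by
  rcases s.eq_empty_or_nonempty with rfl | hne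
  · simp
  obtain ⟨x₀, hx₀, hmin⟩ := hs.exists_isMinOn hne (hf.sub hg)
  filter_upwards [Ioo_mem_nhdsGT (sub_pos.2 (hgf x₀ hx₀))] with ε hε x hx
  have : f x₀ - g x₀ ≤ f x - g x := hmin hx
  linarith [hε.2]

lemma le_rpow_one_sub_mul_rpow {x T r : ℝ} (hx : 0 ≤ x) (hxT : x ≤ T) (hr : r ≤ 1) :
    x ≤ T ^ (1 - r) * x ^ r :=
  calc x = x ^ (1 - r) * x ^ r := by
        rw [← Real.rpow_add' hx (by norm_num), sub_add_cancel, Real.rpow_one]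
    _ ≤ T ^ (1 - r) * x ^ r := by gcongr

lemma sub_mul_sub_le_of_hasDerivAt_le {f f' : ℝ → ℝ} {a c : ℝ}
    (hf : ∀ y, a < y → HasDerivAt f (f' y) y) (hf' : ∀ y, a < y → f' y ≤ c)
    {y₁ y₂ : ℝ} (h₁ : a < y₁) (h₂ : a < y₂) :
    (f y₁ - f y₂) * (y₁ - y₂) ≤ c * (y₁ - y₂) ^ 2 := by
  have hgrowth : ∀ x y, a < x → a < y → x ≤ y → f y - f x ≤ c * (y - x) := by
    intro x y hx hy hxy
    refine (convex_Ioi a).image_sub_le_mul_sub_of_deriv_le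
      (fun z hz => (hf z hz).continuousAt.continuousWithinAt) ?_ ?_ x hx y hy hxy
    · rw [interior_Ioi]
      exact fun z hz => (hf z hz).differentiableAt.differentiableWithinAt
    · rw [interior_Ioi]
      exact fun z hz => (hf z hz).deriv ▸ hf' z hz
  rcases le_total y₂ y₁ with h | h
  · have := mul_le_mul_of_nonneg_right (hgrowth y₂ y₁ h₂ h₁ h) (sub_nonneg.2 h)
    linarith
  · have := mul_le_mul_of_nonneg_right (hgrowth y₁ y₂ h₁ h₂ h) (sub_nonneg.2 h)
    linarith

lemma abs_integral_sub_mul_le {f : ℝ → ℝ} {a b c B : ℝ} (hab : a ≤ b)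
    (hf : IntervalIntegrable f volume a b) (hB : ∀ s ∈ Ioc a b, |f s - c| ≤ B) :
    |(∫ s in a..b, f s) - c * (b - a)| ≤ B * (b - a) := by
  have := intervalIntegral.norm_integral_le_of_norm_le_const (f := fun s => f s - c) (C := B)
    (by rwa [uIoc_of_le hab])
  rwa [intervalIntegral.integral_sub hf intervalIntegrable_const, intervalIntegral.integral_const,
    smul_eq_mul, abs_of_nonneg (sub_nonneg.2 hab), mul_comm (b - a)] at this

lemma abs_le_div_one_sub_of_eq_add {e e' ρ D c Δ : ℝ} (hΔ : 0 ≤ Δ) (hcΔ : c * Δ < 1)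
    (he : e = e' + ρ + D * Δ) (hD : D * e ≤ c * e ^ 2) :
    |e| ≤ (|e'| + |ρ|) / (1 - c * Δ) := by
  have hsq : e ^ 2 * (1 - c * Δ) ≤ |e| * (|e'| + |ρ|) := by
    have h₁ : e * (e' + ρ) ≤ |e| * (|e'| + |ρ|) :=
      calc e * (e' + ρ) ≤ |e * (e' + ρ)| := le_abs_self _
        _ ≤ |e| * (|e'| + |ρ|) := by rw [abs_mul]; gcongr; exact abs_add_le _ _
    have h₂ : e ^ 2 = e * (e' + ρ) + D * e * Δ := by rw [he]; ring
    nlinarith [mul_le_mul_of_nonneg_right hD hΔ]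
  rw [le_div_iff₀ (by linarith)]
  rcases (abs_nonneg e).eq_or_lt with h | h
  · rw [← h, zero_mul]; positivity
  · rw [← sq_abs] at hsq
    nlinarith

lemma le_mul_mul_pow_of_le_mul_add {u : ℕ → ℝ} {q B : ℝ} {n : ℕ} (hq : 1 ≤ q) (hB : 0 ≤ B)
    (h₀ : u 0 ≤ 0) (hu : ∀ k < n, u (k + 1) ≤ q * (u k + B)) :
    ∀ k ≤ n, u k ≤ k * B * q ^ k := by
  intro k
  induction k with
  | zero => simpa using h₀
  | succ k ih =>
    intro hk
    have hqk : q ≤ q ^ (k + 1) := by simpa using pow_le_pow_right₀ hq (Nat.le_add_left 1 k)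
    calc u (k + 1) ≤ q * (u k + B) := hu k hk
      _ ≤ q * (k * B * q ^ k + B) := by
          gcongr
          exact ih (by omega)
      _ = k * B * q ^ (k + 1) + B * q := by ring
      _ ≤ ((k + 1 : ℕ) : ℝ) * B * q ^ (k + 1) := by push_cast; nlinarith

lemma bddAbove_range_inv_one_sub_div_pow (c : ℝ) :
    BddAbove (range fun n : ℕ => (1 - c / n)⁻¹ ^ n) := by
  have := (Real.tendsto_one_add_div_pow_exp (-c)).inv₀ (Real.exp_pos _).ne'
  refine (this.congr fun n => ?_).bddAbove_range
  rw [inv_pow, neg_div, ← sub_eq_add_neg]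

lemma natCast_mul_div_mem_Icc {T : ℝ} {k N : ℕ} (hT : 0 ≤ T) (hk : k ≤ N) :
    (k : ℝ) * T / N ∈ Icc 0 T := by
  refine ⟨by positivity, div_le_of_le_mul₀ (by positivity) hT ?_⟩
  rw [mul_comm T]
  gcongr

lemma min_floor_mul_div_mem_Icc {T t : ℝ} {N : ℕ} (hT : 0 < T) (hN : 0 < N)
    (ht : t ∈ Icc 0 T) : ((min N ⌊t * N / T⌋₊ : ℕ) : ℝ) * T / N ∈ Icc (t - T / N) t := by
  set x := t * N / T
  have hNR : (0 : ℝ) < N := by exact_mod_cast hN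
  have hx₀ : 0 ≤ x := by have := ht.1; positivity
  have hxN : x ≤ N := by
    rw [div_le_iff₀ hT]; nlinarith [ht.2]
  have hmx : ((min N ⌊x⌋₊ : ℕ) : ℝ) ≤ x :=
    le_trans (by exact_mod_cast min_le_right _ _) (Nat.floor_le hx₀)
  have hxm : x ≤ ((min N ⌊x⌋₊ : ℕ) : ℝ) + 1 := by
    rcases le_total N ⌊x⌋₊ with h | h
    · rw [min_eq_left h]; linarith
    · rw [min_eq_right h]; exact (Nat.lt_floor_add_one x).le
  have ht' : t = x * (T / N) := by simp only [x]; field_simp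
  rw [ht', mul_div_assoc]
  constructor <;> nlinarith [div_pos hT hNR]

theorem abs_sub_le_of_implicitEuler {n : ℕ} {c Δ B : ℝ} {y ŷ w : ℕ → ℝ} {g : ℕ → ℝ → ℝ}
    (hc : 0 ≤ c) (hΔ : 0 ≤ Δ) (hcΔ : c * Δ < 1) (hB : 0 ≤ B) (h₀ : y 0 = ŷ 0)
    (hg : ∀ k < n, (g k (y (k + 1)) - g k (ŷ (k + 1))) * (y (k + 1) - ŷ (k + 1))
      ≤ c * (y (k + 1) - ŷ (k + 1)) ^ 2)
    (hy : ∀ k < n, |y (k + 1) - y k - g k (y (k + 1)) * Δ - w k| ≤ B)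
    (hŷ : ∀ k < n, ŷ (k + 1) = ŷ k + g k (ŷ (k + 1)) * Δ + w k) :
    ∀ k ≤ n, |y k - ŷ k| ≤ k * B * (1 - c * Δ)⁻¹ ^ k := by
  have hq : 1 ≤ (1 - c * Δ)⁻¹ := (one_le_inv₀ (by linarith)).2 (by nlinarith)
  refine le_mul_mul_pow_of_le_mul_add hq hB (by simp [h₀]) fun k hk => ?_
  calc |y (k + 1) - ŷ (k + 1)|
      ≤ (|y k - ŷ k| + |y (k + 1) - y k - g k (y (k + 1)) * Δ - w k|) / (1 - c * Δ) :=
        abs_le_div_one_sub_of_eq_add hΔ hcΔ (by linear_combination -hŷ k hk) (hg k hk)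
    _ ≤ (1 - c * Δ)⁻¹ * (|y k - ŷ k| + B) := by
        rw [div_eq_inv_mul]
        gcongr
        exact hy k hk

section IntegralEquation

variable {T Y₀ lam : ℝ} {f Z Y : ℝ → ℝ}

lemma sub_eq_integral_add_sub (hf : ContinuousOn f (Icc 0 T))
    (hY : ∀ t ∈ Icc 0 T, Y t = Y₀ + (∫ s in (0:ℝ)..t, f s) + Z t) {a b : ℝ}
    (ha : a ∈ Icc 0 T) (hb : b ∈ Icc 0 T) :
    Y b - Y a = (∫ s in a..b, f s) + (Z b - Z a) := by
  have hint : ∀ x ∈ Icc 0 T, IntervalIntegrable f volume 0 x := fun x hx =>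
    (hf.mono (uIcc_subset_Icc ⟨le_rfl, hx.1.trans hx.2⟩ hx)).intervalIntegrable
  rw [hY b hb, hY a ha, ← intervalIntegral.integral_interval_sub_left (hint b hb) (hint a ha)]
  ring

lemma exists_abs_sub_le_of_eq_integral {Lam : ℝ} (hT : 0 ≤ T) (hlam : lam ≤ 1) (hLam : 0 ≤ Lam)
    (hf : ContinuousOn f (Icc 0 T))
    (hY : ∀ t ∈ Icc 0 T, Y t = Y₀ + (∫ s in (0:ℝ)..t, f s) + Z t)
    (hZ : ∀ s ∈ Icc 0 T, ∀ t ∈ Icc 0 T, |Z t - Z s| ≤ Lam * |t - s| ^ lam) :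
    ∃ H, 0 ≤ H ∧ ∀ a ∈ Icc 0 T, ∀ b ∈ Icc 0 T, |Y b - Y a| ≤ H * |b - a| ^ lam := by
  obtain ⟨M, hM⟩ := isCompact_Icc.exists_bound_of_continuousOn hf
  refine ⟨max M 0 * T ^ (1 - lam) + Lam, by positivity, fun a ha b hb => ?_⟩
  have hint : |∫ s in a..b, f s| ≤ max M 0 * |b - a| :=
    intervalIntegral.norm_integral_le_of_norm_le_const fun s hs =>
      (hM s (uIcc_subset_Icc ha hb (uIoc_subset_uIcc hs))).trans (le_max_left _ _)
  have hba : |b - a| ≤ T ^ (1 - lam) * |b - a| ^ lam :=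
    le_rpow_one_sub_mul_rpow (abs_nonneg _)
      (abs_sub_le_iff.2 ⟨by linarith [ha.1, hb.2], by linarith [ha.2, hb.1]⟩) hlam
  calc |Y b - Y a| ≤ |∫ s in a..b, f s| + |Z b - Z a| := by
        rw [sub_eq_integral_add_sub hf hY ha hb]; exact abs_add_le _ _
    _ ≤ max M 0 * (T ^ (1 - lam) * |b - a| ^ lam) + Lam * |b - a| ^ lam :=
        add_le_add (hint.trans (by gcongr)) (hZ a ha b hb)
    _ = (max M 0 * T ^ (1 - lam) + Lam) * |b - a| ^ lam := by ring

lemma abs_sub_sub_mul_sub_le_of_eq_integral {A : ℝ} (hlam : 0 ≤ lam) (hA : 0 ≤ A)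
    (hf : ContinuousOn f (Icc 0 T))
    (hY : ∀ t ∈ Icc 0 T, Y t = Y₀ + (∫ s in (0:ℝ)..t, f s) + Z t)
    (hfH : ∀ s ∈ Icc 0 T, ∀ u ∈ Icc 0 T, |f s - f u| ≤ A * |s - u| ^ lam)
    {a b : ℝ} (ha : a ∈ Icc 0 T) (hb : b ∈ Icc 0 T) (hab : a ≤ b) :
    |Y b - Y a - f b * (b - a) - (Z b - Z a)| ≤ A * (b - a) ^ lam * (b - a) := by
  have heq : Y b - Y a - f b * (b - a) - (Z b - Z a) = (∫ s in a..b, f s) - f b * (b - a) := by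
    rw [sub_eq_integral_add_sub hf hY ha hb]; ring
  rw [heq]
  refine abs_integral_sub_mul_le hab (hf.mono (uIcc_subset_Icc ha hb)).intervalIntegrable
    fun s hs => ?_
  calc |f s - f b| ≤ A * |s - b| ^ lam := hfH s ⟨ha.1.trans hs.1.le, hs.2.trans hb.2⟩ b hb
    _ ≤ A * (b - a) ^ lam := by
        rw [abs_sub_comm, abs_of_nonneg (sub_nonneg.2 hs.2)]
        gcongr <;> linarith [hs.1, hs.2]

end IntegralEquation

lemma exists_drift_holder_of_lipschitz_away {T lam c1 p H : ℝ} {phi Y : ℝ → ℝ}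
    {b : ℝ → ℝ → ℝ} (hc1 : 0 ≤ c1) (hH : 0 ≤ H) (hphi : ContinuousOn phi (Icc 0 T))
    (hY : ContinuousOn Y (Icc 0 T)) (hYphi : ∀ t ∈ Icc 0 T, phi t < Y t)
    (hb : ∀ ε : ℝ, 0 < ε → ε < 1 → ∀ t1 ∈ Icc 0 T, ∀ t2 ∈ Icc 0 T, ∀ y1 y2 : ℝ,
      phi t1 + ε < y1 → phi t2 + ε < y2 →
      |b t1 y1 - b t2 y2| ≤ c1 / ε ^ p * (|y1 - y2| + |t1 - t2| ^ lam))
    (hYH : ∀ s ∈ Icc 0 T, ∀ u ∈ Icc 0 T, |Y u - Y s| ≤ H * |u - s| ^ lam) :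
    ∃ A, 0 ≤ A ∧ ∀ s ∈ Icc 0 T, ∀ u ∈ Icc 0 T, |b s (Y s) - b u (Y u)| ≤ A * |s - u| ^ lam := by
  obtain ⟨ε, hεY, hε₀, hε₁⟩ :=
    ((isCompact_Icc.eventually_forall_add_lt hY hphi hYphi).and (Ioo_mem_nhdsGT one_pos)).exists
  refine ⟨c1 / ε ^ p * (H + 1), by positivity, fun s hs u hu => ?_⟩
  calc |b s (Y s) - b u (Y u)| ≤ c1 / ε ^ p * (|Y s - Y u| + |s - u| ^ lam) :=
        hb ε hε₀ hε₁ s hs u hu _ _ (hεY s hs) (hεY u hu)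
    _ ≤ c1 / ε ^ p * (H * |s - u| ^ lam + |s - u| ^ lam) := by
        gcongr
        exact hYH u hu s hs
    _ = c1 / ε ^ p * (H + 1) * |s - u| ^ lam := by ring

theorem abs_sub_implicitEuler_le {T lam A c Y₀ : ℝ} {N : ℕ} {phi Y Z : ℝ → ℝ}
    {b : ℝ → ℝ → ℝ} {Ŷ : ℕ → ℝ} (hT : 0 < T) (hlam : 0 ≤ lam) (hA : 0 ≤ A) (hc : 0 ≤ c)
    (hcΔ : c * (T / N) < 1)
    (hb : ∀ t ∈ Icc 0 T, ∀ y₁ y₂ : ℝ, phi t < y₁ → phi t < y₂ →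
      (b t y₁ - b t y₂) * (y₁ - y₂) ≤ c * (y₁ - y₂) ^ 2)
    (hf : ContinuousOn (fun s => b s (Y s)) (Icc 0 T))
    (hfH : ∀ s ∈ Icc 0 T, ∀ u ∈ Icc 0 T, |b s (Y s) - b u (Y u)| ≤ A * |s - u| ^ lam)
    (hYphi : ∀ t ∈ Icc 0 T, phi t < Y t)
    (hY : ∀ t ∈ Icc 0 T, Y t = Y₀ + (∫ s in (0:ℝ)..t, b s (Y s)) + Z t)
    (hZ₀ : Z 0 = 0) (hŶ₀ : Ŷ 0 = Y₀)
    (hŶ : ∀ k < N, phi (((k : ℝ) + 1) * T / N) < Ŷ (k + 1) ∧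
      Ŷ (k + 1) = Ŷ k + b (((k : ℝ) + 1) * T / N) (Ŷ (k + 1)) * (T / N)
        + (Z (((k : ℝ) + 1) * T / N) - Z (k * T / N))) :
    ∀ k ≤ N, |Y (k * T / N) - Ŷ k| ≤
      k * (A * (T / N) ^ lam * (T / N)) * (1 - c * (T / N))⁻¹ ^ k := by
  have hsucc : ∀ k : ℕ, ((k + 1 : ℕ) : ℝ) * T / N = ((k : ℝ) + 1) * T / N := fun k => by
    push_cast; ring
  have hY₀ : Y 0 = Y₀ := by simpa [hZ₀] using hY 0 ⟨le_rfl, hT.le⟩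
  refine abs_sub_le_of_implicitEuler (y := fun k => Y (k * T / N))
    (g := fun k => b (((k : ℝ) + 1) * T / N))
    (w := fun k => Z (((k : ℝ) + 1) * T / N) - Z (k * T / N)) hc (by positivity) hcΔ
    (by positivity) (by simp [hY₀, hŶ₀]) (fun k hk => ?_) (fun k hk => ?_) fun k hk => (hŶ k hk).2
  all_goals
    have hk₁ : ((k : ℝ) + 1) * T / N ∈ Icc 0 T := hsucc k ▸ natCast_mul_div_mem_Icc hT.le hk
    simp only [hsucc]
  · exact hb _ hk₁ _ _ (hYphi _ hk₁) (hŶ k hk).1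
  · have hΔ : ((k : ℝ) + 1) * T / N - k * T / N = T / N := by ring
    simpa only [hΔ] using abs_sub_sub_mul_sub_le_of_eq_integral hlam hA hf hY hfH
      (natCast_mul_div_mem_Icc hT.le hk.le) hk₁ (by gcongr; linarith)

theorem stmt_16_general
    (T lam : ℝ) (hT : 0 < T) (hlam : lam ∈ Set.Ioo (0:ℝ) 1)
    (phi : ℝ → ℝ) (K : ℝ)
    (hphiH : ∀ s ∈ Set.Icc (0:ℝ) T, ∀ t ∈ Set.Icc (0:ℝ) T, |phi t - phi s| ≤ K * |t - s| ^ lam)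
    (b : ℝ → ℝ → ℝ) (c1 p : ℝ)
    (hc1 : 0 < c1)
    (hA2cont : ContinuousOn (fun q : ℝ × ℝ => b q.1 q.2)
      {q : ℝ × ℝ | q.1 ∈ Set.Icc (0:ℝ) T ∧ phi q.1 < q.2})
    (hA2lip : ∀ ε : ℝ, 0 < ε → ε < 1 →
      ∀ t1 ∈ Set.Icc (0:ℝ) T, ∀ t2 ∈ Set.Icc (0:ℝ) T, ∀ y1 y2 : ℝ,
        phi t1 + ε < y1 → phi t2 + ε < y2 →
        |b t1 y1 - b t2 y2| ≤ c1 / ε ^ p * (|y1 - y2| + |t1 - t2| ^ lam))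
    (Y0 : ℝ)
    (bp : ℝ → ℝ → ℝ) (c3 : ℝ) (hc3 : 0 < c3)
    (hA4deriv : ∀ t ∈ Set.Icc (0:ℝ) T, ∀ y : ℝ, phi t < y →
      HasDerivAt (fun x => b t x) (bp t y) y)
    (hA4lt : ∀ t ∈ Set.Icc (0:ℝ) T, ∀ y : ℝ, phi t < y → bp t y < c3)
    (Z : ℝ → ℝ) (Lam : ℝ) (hLam : 0 < Lam) (hZ0 : Z 0 = 0)
    (hZH : ∀ s ∈ Set.Icc (0:ℝ) T, ∀ t ∈ Set.Icc (0:ℝ) T, |Z t - Z s| ≤ Lam * |t - s| ^ lam)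
    (Y : ℝ → ℝ) (hYc : ContinuousOn Y (Set.Icc (0:ℝ) T))
    (hYsand : ∀ t ∈ Set.Icc (0:ℝ) T, phi t < Y t)
    (hYeq : ∀ t ∈ Set.Icc (0:ℝ) T, Y t = Y0 + (∫ s in (0:ℝ)..t, b s (Y s)) + Z t)
    (Yh : ℕ → ℕ → ℝ) (hYh0 : ∀ N : ℕ, Yh N 0 = Y0)
    (hYhrec : ∀ N : ℕ, 0 < N → max c3 (c1 / (Y0 - phi 0) ^ p) * (T / (N : ℝ)) < 1 → ∀ k : ℕ, k < N →
      phi (((k : ℝ) + 1) * T / (N : ℝ)) < Yh N (k + 1) ∧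
      Yh N (k + 1) = Yh N k + b (((k : ℝ) + 1) * T / (N : ℝ)) (Yh N (k + 1)) * (T / (N : ℝ))
        + (Z (((k : ℝ) + 1) * T / (N : ℝ)) - Z ((k : ℝ) * T / (N : ℝ))))
    :
    ∀ r : ℝ, 1 ≤ r → ∃ C : ℝ, 0 < C ∧
      ∀ N : ℕ, 0 < N → max c3 (c1 / (Y0 - phi 0) ^ p) * (T / (N : ℝ)) < 1 →
        ∀ t ∈ Set.Icc (0:ℝ) T,
          |Y t - Yh N (min N ⌊t * (N : ℝ) / T⌋₊)| ^ r ≤ C * (T / (N : ℝ)) ^ (lam * r) := by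
  obtain ⟨hlam₀, hlam₁⟩ := hlam
  intro r hr
  have hf : ContinuousOn (fun s => b s (Y s)) (Icc 0 T) :=
    hA2cont.comp (continuousOn_id.prodMk hYc) fun s hs => ⟨hs, hYsand s hs⟩
  obtain ⟨H, hH, hYH⟩ := exists_abs_sub_le_of_eq_integral hT.le hlam₁.le hLam.le hf hYeq hZH
  obtain ⟨A, hA, hfH⟩ := exists_drift_holder_of_lipschitz_away hc1.le hH
    (continuousOn_of_abs_sub_le_mul_rpow hlam₀ hphiH) hYc hYsand hA2lip hYH
  obtain ⟨E, hE⟩ := bddAbove_range_inv_one_sub_div_pow (c3 * T)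
  have hE₁ : 1 ≤ E := by simpa using hE ⟨0, rfl⟩
  refine ⟨(H + A * T * E + 1) ^ r, by positivity, fun N hN hcond t ht => ?_⟩
  set Δ := T / N with hΔ
  have hΔ₀ : 0 < Δ := by positivity
  have hc3Δ : c3 * Δ < 1 := (mul_le_mul_of_nonneg_right (le_max_left _ _) hΔ₀.le).trans_lt hcond
  set m := min N ⌊t * N / T⌋₊
  have hmN : m ≤ N := min_le_left _ _
  obtain ⟨hmt₁, hmt₂⟩ := min_floor_mul_div_mem_Icc hT hN ht
  have hq : 1 ≤ (1 - c3 * Δ)⁻¹ := (one_le_inv₀ (by linarith)).2 (by nlinarith)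
  have hgrid : |Y (m * T / N) - Yh N m| ≤ A * T * E * Δ ^ lam :=
    calc _ ≤ m * (A * Δ ^ lam * Δ) * (1 - c3 * Δ)⁻¹ ^ m :=
          abs_sub_implicitEuler_le hT hlam₀.le hA hc3.le hc3Δ
            (fun t ht y₁ y₂ h₁ h₂ => sub_mul_sub_le_of_hasDerivAt_le (hA4deriv t ht)
              (fun y hy => (hA4lt t ht y hy).le) h₁ h₂)
            hf hfH hYsand hYeq hZ0 (hYh0 N) (hYhrec N hN hcond) m hmN
      _ ≤ N * (A * Δ ^ lam * Δ) * (1 - c3 * Δ)⁻¹ ^ N := by gcongr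
      _ = A * T * (1 - c3 * T / N)⁻¹ ^ N * Δ ^ lam := by
          rw [hΔ, mul_div_assoc]; field_simp
      _ ≤ A * T * E * Δ ^ lam := by gcongr; exact hE ⟨N, rfl⟩
  have hinc : |Y t - Y (m * T / N)| ≤ H * Δ ^ lam :=
    (hYH _ (natCast_mul_div_mem_Icc hT.le hmN) t ht).trans
      (by gcongr; rw [abs_of_nonneg (by linarith)]; linarith)
  calc |Y t - Yh N m| ^ r ≤ ((H + A * T * E + 1) * Δ ^ lam) ^ r := by
        gcongr
        have := abs_sub_le (Y t) (Y (m * T / N)) (Yh N m)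
        nlinarith [Real.rpow_pos_of_pos hΔ₀ lam]
    _ = (H + A * T * E + 1) ^ r * Δ ^ (lam * r) := by
        rw [Real.mul_rpow (by positivity) (by positivity), ← Real.rpow_mul hΔ₀.le]

theorem stmt_16
    (T lam : ℝ) (hT : 0 < T) (hlam : lam ∈ Set.Ioo (0:ℝ) 1)
    (phi : ℝ → ℝ) (K : ℝ) (hK : 0 < K)
    (hphiH : ∀ s ∈ Set.Icc (0:ℝ) T, ∀ t ∈ Set.Icc (0:ℝ) T, |phi t - phi s| ≤ K * |t - s| ^ lam)
    (b : ℝ → ℝ → ℝ) (c1 p c2 ystar gam : ℝ)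
    (hc1 : 0 < c1) (hp : 1 < p) (hc2 : 0 < c2) (hystar : 0 < ystar)
    (hgam : 1 / lam - 1 < gam)
    (hA2cont : ContinuousOn (fun q : ℝ × ℝ => b q.1 q.2)
      {q : ℝ × ℝ | q.1 ∈ Set.Icc (0:ℝ) T ∧ phi q.1 < q.2})
    (hA2lip : ∀ ε : ℝ, 0 < ε → ε < 1 →
      ∀ t1 ∈ Set.Icc (0:ℝ) T, ∀ t2 ∈ Set.Icc (0:ℝ) T, ∀ y1 y2 : ℝ,
        phi t1 + ε < y1 → phi t2 + ε < y2 →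
        |b t1 y1 - b t2 y2| ≤ c1 / ε ^ p * (|y1 - y2| + |t1 - t2| ^ lam))
    (hA3 : ∀ t ∈ Set.Icc (0:ℝ) T, ∀ y : ℝ, phi t < y → y ≤ phi t + ystar →
      c2 / (y - phi t) ^ gam ≤ b t y)
    (Y0 : ℝ) (hA1 : phi 0 < Y0)
    (bp : ℝ → ℝ → ℝ) (c3 : ℝ) (hc3 : 0 < c3)
    (hA4deriv : ∀ t ∈ Set.Icc (0:ℝ) T, ∀ y : ℝ, phi t < y →
      HasDerivAt (fun x => b t x) (bp t y) y)
    (hA4cont : ContinuousOn (fun q : ℝ × ℝ => bp q.1 q.2)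
      {q : ℝ × ℝ | q.1 ∈ Set.Icc (0:ℝ) T ∧ phi q.1 < q.2})
    (hA4lt : ∀ t ∈ Set.Icc (0:ℝ) T, ∀ y : ℝ, phi t < y → bp t y < c3)
    (Z : ℝ → ℝ) (Lam : ℝ) (hLam : 0 < Lam) (hZ0 : Z 0 = 0)
    (hZH : ∀ s ∈ Set.Icc (0:ℝ) T, ∀ t ∈ Set.Icc (0:ℝ) T, |Z t - Z s| ≤ Lam * |t - s| ^ lam)
    (Y : ℝ → ℝ) (hYc : ContinuousOn Y (Set.Icc (0:ℝ) T))
    (hYsand : ∀ t ∈ Set.Icc (0:ℝ) T, phi t < Y t)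
    (hYeq : ∀ t ∈ Set.Icc (0:ℝ) T, Y t = Y0 + (∫ s in (0:ℝ)..t, b s (Y s)) + Z t)
    (Yh : ℕ → ℕ → ℝ) (hYh0 : ∀ N : ℕ, Yh N 0 = Y0)
    (hYhrec : ∀ N : ℕ, 0 < N → max c3 (c1 / (Y0 - phi 0) ^ p) * (T / (N : ℝ)) < 1 → ∀ k : ℕ, k < N →
      phi (((k : ℝ) + 1) * T / (N : ℝ)) < Yh N (k + 1) ∧
      Yh N (k + 1) = Yh N k + b (((k : ℝ) + 1) * T / (N : ℝ)) (Yh N (k + 1)) * (T / (N : ℝ))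
        + (Z (((k : ℝ) + 1) * T / (N : ℝ)) - Z ((k : ℝ) * T / (N : ℝ))))
    :
    ∀ r : ℝ, 1 ≤ r → ∃ C : ℝ, 0 < C ∧
      ∀ N : ℕ, 0 < N → max c3 (c1 / (Y0 - phi 0) ^ p) * (T / (N : ℝ)) < 1 →
        ∀ t ∈ Set.Icc (0:ℝ) T,
          |Y t - Yh N (min N ⌊t * (N : ℝ) / T⌋₊)| ^ r ≤ C * (T / (N : ℝ)) ^ (lam * r) :=
  stmt_16_general T lam hT hlam phi K hphiH b c1 p hc1 hA2cont hA2lip Y0 bp c3 hc3 hA4deriv hA4lt Z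
    Lam hLam hZ0 hZH Y hYc hYsand hYeq Yh hYh0 hYhrec
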